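/- arXiv:1006.3890 — 8 statements merged into one kernel-verified Lean document; each statement's English description precedes it below -/
import Mathlib

section
/- Let λ ∈ ℝ, let I ⊆ ℝ be an open interval, and let y : I → ℝ be a C³ function with y(x) ≠ 0 for all x ∈ I that satisfies 2·y·y'' − 3·(y')² + 4λ·y⁴ = 0 on I. Then there exist real constants c₁, c₂, c₃ with c₂² − 4c₁c₃ + 4λ = 0 such that y(x)·(c₁x² + c₂x + c₃) = 1 for all x ∈ I. -/
/-!
For `u = 1/y` one has `u' = -y'/y²` and, using the equation to eliminate `y''`,
`u'' = y'²/(2y³) + 2λy`; differentiating once more and using the equation again gives `u''' = 0`.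
So `u` is a quadratic `c₁x² + c₂x + c₃` on the interval, and its discriminant is read off the
identity `u'² - 2uu'' = -4λ`, which holds pointwise for every nonvanishing `y`.
-/

theorem IsOpen.exists_eq_add_of_hasDerivAt {s : Set ℝ} {f g h : ℝ → ℝ} (hs : IsOpen s)
    (hs' : IsPreconnected s) (hf : ∀ x ∈ s, HasDerivAt f (h x) x)
    (hg : ∀ x ∈ s, HasDerivAt g (h x) x) : ∃ a, ∀ x ∈ s, f x = g x + a :=
  hs.exists_eq_add_of_deriv_eq hs' (fun x hx => (hf x hx).differentiableAt.differentiableWithinAt)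
    (fun x hx => (hg x hx).differentiableAt.differentiableWithinAt)
    (fun x hx => (hf x hx).deriv.trans (hg x hx).deriv.symm)

theorem IsOpen.exists_quadratic_of_hasDerivAt {s : Set ℝ} {f f' f'' : ℝ → ℝ} (hs : IsOpen s)
    (hs' : IsPreconnected s) (hf : ∀ x ∈ s, HasDerivAt f (f' x) x)
    (hf' : ∀ x ∈ s, HasDerivAt f' (f'' x) x) (hf'' : ∀ x ∈ s, HasDerivAt f'' 0 x) :
    ∃ c₁ c₂ c₃ : ℝ, ∀ x ∈ s,
      f x = c₁ * x ^ 2 + c₂ * x + c₃ ∧ f' x = 2 * c₁ * x + c₂ ∧ f'' x = 2 * c₁ := by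
  obtain ⟨k, hk⟩ := hs.exists_eq_add_of_hasDerivAt hs' hf'' fun x _ => hasDerivAt_const x 0
  obtain ⟨c₂, hc₂⟩ := hs.exists_eq_add_of_hasDerivAt hs' hf' fun x hx =>
    ((hasDerivAt_id' x).const_mul k).congr_deriv (by rw [hk x hx]; ring)
  obtain ⟨c₃, hc₃⟩ := hs.exists_eq_add_of_hasDerivAt hs' hf fun x hx =>
    (((hasDerivAt_pow 2 x).const_mul (k / 2)).add ((hasDerivAt_id' x).const_mul c₂)).congr_deriv
      (by rw [hc₂ x hx]; ring)
  refine ⟨k / 2, c₂, c₃, fun x hx => ⟨hc₃ x hx, ?_, ?_⟩⟩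
  · rw [hc₂ x hx]; ring
  · rw [hk x hx]; ring

section ReciprocalOfSolution

variable {lam x : ℝ} {y y' y'' : ℝ → ℝ}

theorem hasDerivAt_inv_deriv_of_ode (hy : HasDerivAt y (y' x) x) (hy' : HasDerivAt y' (y'' x) x)
    (hx : y x ≠ 0) (hode : 2 * y x * y'' x - 3 * y' x ^ 2 + 4 * lam * y x ^ 4 = 0) :
    HasDerivAt (fun x => -(y' x / y x ^ 2)) (y' x ^ 2 / (2 * y x ^ 3) + 2 * lam * y x) x := by
  refine (hy'.div (hy.pow 2) (pow_ne_zero 2 hx)).neg.congr_deriv ?_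
  simp only [Pi.pow_apply]
  field_simp
  linear_combination (-y x) * hode

theorem hasDerivAt_inv_second_deriv_of_ode (hy : HasDerivAt y (y' x) x)
    (hy' : HasDerivAt y' (y'' x) x) (hx : y x ≠ 0)
    (hode : 2 * y x * y'' x - 3 * y' x ^ 2 + 4 * lam * y x ^ 4 = 0) :
    HasDerivAt (fun x => y' x ^ 2 / (2 * y x ^ 3) + 2 * lam * y x) 0 x := by
  refine (((hy'.pow 2).div ((hy.pow 3).const_mul 2) (by simpa using hx)).add
    (hy.const_mul (2 * lam))).congr_deriv ?_
  simp only [Pi.pow_apply]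
  field_simp
  linear_combination y' x * y x ^ 2 * hode

theorem inv_deriv_sq_sub_two_mul_inv_mul_inv_second_deriv (hx : y x ≠ 0) :
    (-(y' x / y x ^ 2)) ^ 2 - 2 * (y x)⁻¹ * (y' x ^ 2 / (2 * y x ^ 3) + 2 * lam * y x) =
      -4 * lam := by
  field_simp
  ring

end ReciprocalOfSolution

/-- A nonvanishing C³ solution of 2yy'' − 3(y')² + 4λy⁴ = 0 on an open interval
is of the form y = 1/(c₁x² + c₂x + c₃) with c₂² − 4c₁c₃ + 4λ = 0. -/
theorem stmt_1 (lam a b : ℝ) (y : ℝ → ℝ)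
    (hy : ContDiffOn ℝ 3 y (Set.Ioo a b))
    (hne : ∀ x ∈ Set.Ioo a b, y x ≠ 0)
    (hode : ∀ x ∈ Set.Ioo a b,
      2 * y x * deriv (deriv y) x - 3 * (deriv y x) ^ 2 + 4 * lam * (y x) ^ 4 = 0) :
    ∃ c₁ c₂ c₃ : ℝ, c₂ ^ 2 - 4 * c₁ * c₃ + 4 * lam = 0 ∧
      ∀ x ∈ Set.Ioo a b, y x * (c₁ * x ^ 2 + c₂ * x + c₃) = 1 := by
  rcases (Set.Ioo a b).eq_empty_or_nonempty with hs | ⟨x₀, hx₀⟩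
  · exact ⟨1, 0, lam, by ring, by simp [hs]⟩
  have hy₁ : ∀ x ∈ Set.Ioo a b, HasDerivAt y (deriv y x) x := fun x hx =>
    ((hy.differentiableOn (by norm_num)).differentiableAt (isOpen_Ioo.mem_nhds hx)).hasDerivAt
  have hy₂ : ∀ x ∈ Set.Ioo a b, HasDerivAt (deriv y) (deriv (deriv y) x) x := fun x hx =>
    (((hy.deriv_of_isOpen (m := 2) isOpen_Ioo (by norm_num)).differentiableOn
      (by norm_num)).differentiableAt (isOpen_Ioo.mem_nhds hx)).hasDerivAt
  obtain ⟨c₁, c₂, c₃, hc⟩ :=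
    isOpen_Ioo.exists_quadratic_of_hasDerivAt (f := fun x => (y x)⁻¹) isPreconnected_Ioo
    (fun x hx => ((hy₁ x hx).inv (hne x hx)).congr_deriv (neg_div _ _))
    (fun x hx => hasDerivAt_inv_deriv_of_ode (hy₁ x hx) (hy₂ x hx) (hne x hx) (hode x hx))
    (fun x hx =>
      hasDerivAt_inv_second_deriv_of_ode (hy₁ x hx) (hy₂ x hx) (hne x hx) (hode x hx))
  refine ⟨c₁, c₂, c₃, ?_, fun x hx => ?_⟩
  · obtain ⟨hu, hu', hu''⟩ := hc x₀ hx₀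
    have h := inv_deriv_sq_sub_two_mul_inv_mul_inv_second_deriv (lam := lam) (y' := deriv y)
      (hne x₀ hx₀)
    rw [hu, hu', hu''] at h
    linear_combination h
  · rw [← (hc x hx).1]
    exact mul_inv_cancel₀ (hne x hx)
end

section
/- Let λ ∈ ℝ, let I ⊆ ℝ be an open interval, and let w : I → ℝ be a C³ function with w(x) ≠ 0 for all x ∈ I that satisfies (w'(x))² − 2·w(x)·w''(x) + 4λ = 0 on I. Then w'''(x) = 0 for all x ∈ I; consequently there exist constants c₁, c₂, c₃ ∈ ℝ such that w(x) = c₁x² + c₂x + c₃ on I. -/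
/-!
Differentiating `(w')² - 2 w w'' + 4λ` gives `-2 w w'''`, since the two `w' w''` terms cancel.
The expression is constant, so `w w''' = 0`, and `w ≠ 0` forces `w''' = 0`. Integrating three
times on the connected interval shows that `w` is a quadratic polynomial there.
-/

open Set

theorem IsOpen.exists_eqOn_quadratic_of_deriv_deriv_deriv_eqOn_zero {s : Set ℝ} {f : ℝ → ℝ}
    (hs : IsOpen s) (hs' : IsPreconnected s) (hf : DifferentiableOn ℝ f s)
    (hf' : DifferentiableOn ℝ (deriv f) s) (hf'' : DifferentiableOn ℝ (deriv (deriv f)) s)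
    (h : s.EqOn (deriv (deriv (deriv f))) 0) :
    ∃ c₁ c₂ c₃ : ℝ, ∀ x ∈ s, f x = c₁ * x ^ 2 + c₂ * x + c₃ := by
  obtain ⟨c, hc⟩ := hs.exists_is_const_of_deriv_eq_zero hs' hf'' h
  obtain ⟨b, hb⟩ := hs.exists_eq_add_of_deriv_eq hs' hf' (differentiableOn_id.const_mul c)
    (fun x hx => by simp [hc x hx])
  obtain ⟨d, hd⟩ := hs.exists_eq_add_of_deriv_eq hs' hf
    (g := fun x => c / 2 * x ^ 2 + b * x) (by fun_prop)
    (fun x hx => by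
      rw [hb hx, (((hasDerivAt_pow 2 x).const_mul (c / 2)).fun_add
        ((hasDerivAt_id' x).const_mul b)).deriv]
      simp only [id]
      ring)
  exact ⟨c / 2, b, d, fun x hx => hd hx⟩

theorem hasDerivAt_deriv_sq_sub_two_mul_mul_deriv_deriv {w : ℝ → ℝ} {x : ℝ}
    (hw : DifferentiableAt ℝ w x) (hw' : DifferentiableAt ℝ (deriv w) x)
    (hw'' : DifferentiableAt ℝ (deriv (deriv w)) x) :
    HasDerivAt (fun y => deriv w y ^ 2 - 2 * w y * deriv (deriv w) y)
      (-2 * w x * deriv (deriv (deriv w)) x) x := by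
  refine ((hw'.hasDerivAt.fun_pow 2).fun_sub
    ((hw.hasDerivAt.const_mul 2).fun_mul hw''.hasDerivAt)).congr_deriv ?_
  push_cast
  ring

theorem IsOpen.deriv_deriv_deriv_eqOn_zero_of_ode {s : Set ℝ} {w : ℝ → ℝ} (lam : ℝ)
    (hs : IsOpen s) (hw : DifferentiableOn ℝ w s)
    (hw' : DifferentiableOn ℝ (deriv w) s) (hw'' : DifferentiableOn ℝ (deriv (deriv w)) s)
    (hne : ∀ x ∈ s, w x ≠ 0)
    (hode : ∀ x ∈ s, deriv w x ^ 2 - 2 * w x * deriv (deriv w) x + 4 * lam = 0) :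
    s.EqOn (deriv (deriv (deriv w))) 0 := by
  intro x hx
  have hnhds := hs.mem_nhds hx
  have hconst : HasDerivAt (fun y => deriv w y ^ 2 - 2 * w y * deriv (deriv w) y) 0 x :=
    (hasDerivAt_const x (-4 * lam)).congr_of_eventuallyEq <| by
      filter_upwards [hnhds] with y hy
      linarith [hode y hy]
  have hzero := (hasDerivAt_deriv_sq_sub_two_mul_mul_deriv_deriv (hw.differentiableAt hnhds)
    (hw'.differentiableAt hnhds) (hw''.differentiableAt hnhds)).unique hconst
  simpa [hne x hx] using hzero

/-- A nonvanishing C³ solution of (w')² − 2ww'' + 4λ = 0 on an open interval has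
vanishing third derivative, hence is a quadratic polynomial. -/
theorem stmt_3 (lam a b : ℝ) (w : ℝ → ℝ)
    (hw : ContDiffOn ℝ 3 w (Set.Ioo a b))
    (hne : ∀ x ∈ Set.Ioo a b, w x ≠ 0)
    (hode : ∀ x ∈ Set.Ioo a b,
      (deriv w x) ^ 2 - 2 * w x * deriv (deriv w) x + 4 * lam = 0) :
    (∀ x ∈ Set.Ioo a b, deriv (deriv (deriv w)) x = 0) ∧
      ∃ c₁ c₂ c₃ : ℝ, ∀ x ∈ Set.Ioo a b, w x = c₁ * x ^ 2 + c₂ * x + c₃ := by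
  have hw' : ContDiffOn ℝ 2 (deriv w) (Ioo a b) := hw.deriv_of_isOpen isOpen_Ioo (by norm_num)
  have hw'' : ContDiffOn ℝ 1 (deriv (deriv w)) (Ioo a b) :=
    hw'.deriv_of_isOpen isOpen_Ioo (by norm_num)
  have hd := hw.differentiableOn (by norm_num)
  have hd' := hw'.differentiableOn (by norm_num)
  have hd'' := hw''.differentiableOn (by norm_num)
  have h3 := isOpen_Ioo.deriv_deriv_deriv_eqOn_zero_of_ode lam hd hd' hd'' hne hode
  exact ⟨h3, isOpen_Ioo.exists_eqOn_quadratic_of_deriv_deriv_deriv_eqOn_zero isPreconnected_Ioo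
    hd hd' hd'' h3⟩
end

section
/- Let λ ∈ ℝ, let U ⊆ ℝ² be an open set with coordinates (z₁, z₂), and let φ : U → ℝ be a C² positive function such that the quantity D := 4λφ⁴z₂² + (∂φ/∂z₂)²z₂² + 4(∂φ/∂z₂)·φ·z₂ + 4φ² is nonzero on U. Suppose φ satisfies on U both: (i) ∂φ/∂z₁ = z₁·( (∂φ/∂z₂)³·z₂ + 4λφ⁴·(∂φ/∂z₂)·z₂ − 4λφ⁵ + 3(∂φ/∂z₂)²·φ ) / D, and (ii) ∂²φ/∂z₁∂z₂ = z₁·( −16λ²φ⁸z₂ + 8λφ⁴(∂φ/∂z₂)²z₂ − 32λφ⁵(∂φ/∂z₂) + 3(∂φ/∂z₂)⁴z₂ + 8(∂φ/∂z₂)³φ ) / (2φ·D). Then at every point of U either 3(∂φ/∂z₂)² − 2φ·(∂²φ/∂z₂²) − 4λφ⁴ = 0, or (∂φ/∂z₂)·(2φ + z₂·∂φ/∂z₂)·(z₂²(∂φ/∂z₂)² + 6z₂φ(∂φ/∂z₂) + 12φ²) + 8λz₂φ⁴·(2λz₂²φ⁴ + 4φ² + 4z₂φ(∂φ/∂z₂)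 + z₂²(∂φ/∂z₂)²) = 0. -/
/-!
Differentiating (i) in `z₂` and comparing with (ii) through the symmetry of the mixed second
partials of the `C²` function `φ` gives `z₁ (2φ (N₁' D - N₁ D') - N₂ D) = 0`, where `N₁, N₂` are
the numerators of (i), (ii) and `'` is the total `z₂`-derivative. The bracket factors as
`-E₆ E₇`, the product of the two alternatives of the conclusion, so `E₆ E₇` vanishes where
`z₁ ≠ 0`, hence on all of `U` by continuity.
-/

open Filter Topology Set

noncomputable section PartialDerivatives

variable {E : Type*} [NormedAddCommGroup E] [NormedSpace ℝ E] {f g : ℝ × ℝ → E}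
  {f' : ℝ × ℝ →L[ℝ] E} {p : ℝ × ℝ}

def partialFst (f : ℝ × ℝ → E) (p : ℝ × ℝ) : E := deriv (fun s => f (s, p.2)) p.1

def partialSnd (f : ℝ × ℝ → E) (p : ℝ × ℝ) : E := deriv (fun t => f (p.1, t)) p.2

theorem HasFDerivAt.partialFst_eq (h : HasFDerivAt f f' p) : partialFst f p = f' (1, 0) :=
  (h.comp_hasDerivAt p.1 ((hasDerivAt_id p.1).prodMk (hasDerivAt_const p.1 p.2))).deriv

theorem HasFDerivAt.partialSnd_eq (h : HasFDerivAt f f' p) : partialSnd f p = f' (0, 1) :=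
  (h.comp_hasDerivAt p.2 ((hasDerivAt_const p.2 p.1).prodMk (hasDerivAt_id p.2))).deriv

theorem DifferentiableAt.hasDerivAt_partialSnd (h : DifferentiableAt ℝ f p) :
    HasDerivAt (fun t => f (p.1, t)) (partialSnd f p) p.2 :=
  (h.comp p.2 ((differentiableAt_const p.1).prodMk differentiableAt_id)).hasDerivAt

theorem Filter.EventuallyEq.partialSnd_eq (h : f =ᶠ[𝓝 p] g) :
    partialSnd f p = partialSnd g p :=
  (h.comp_tendsto ((continuous_const.prodMk continuous_id).tendsto' p.2 p rfl)).deriv_eq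

theorem ContDiffOn.partialSnd {n : WithTop ℕ∞} {U : Set (ℝ × ℝ)}
    (hf : ContDiffOn ℝ (n + 1) f U) (hU : IsOpen U) : ContDiffOn ℝ n (partialSnd f) U := by
  refine ((hf.fderiv_of_isOpen hU le_rfl).clm_apply (contDiffOn_const (c := (0, 1)))).congr
    fun q hq => ?_
  have hdiff := (hf.differentiableOn (by simp)).differentiableAt (hU.mem_nhds hq)
  exact hdiff.hasFDerivAt.partialSnd_eq

theorem partialSnd_partialFst (hf : ContDiffAt ℝ 2 f p) :
    partialSnd (partialFst f) p = partialFst (partialSnd f) p := by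
  have hdiff : ∀ᶠ q in 𝓝 p, HasFDerivAt f (fderiv ℝ f q) q :=
    (hf.eventually (by simp)).mono fun q hq => (hq.differentiableAt (by simp)).hasFDerivAt
  have h2 : HasFDerivAt (fderiv ℝ f) (fderiv ℝ (fderiv ℝ f) p) p :=
    ((hf.fderiv_right (m := 1) le_rfl).differentiableAt one_ne_zero).hasFDerivAt
  have hslice (v : ℝ × ℝ) : HasFDerivAt (fun q => fderiv ℝ f q v)
      ((ContinuousLinearMap.apply ℝ E v).comp (fderiv ℝ (fderiv ℝ f) p)) p :=
    (ContinuousLinearMap.apply ℝ E v).hasFDerivAt.comp p h2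
  have hFst : HasFDerivAt (partialFst f) _ p :=
    (hslice (1, 0)).congr_of_eventuallyEq (hdiff.mono fun q hq => hq.partialFst_eq)
  have hSnd : HasFDerivAt (partialSnd f) _ p :=
    (hslice (0, 1)).congr_of_eventuallyEq (hdiff.mono fun q hq => hq.partialSnd_eq)
  rw [hFst.partialSnd_eq, hSnd.partialFst_eq]
  exact hf.isSymmSndFDerivAt (by simp) _ _

end PartialDerivatives

section CharacteristicExpressions

/- `a, b, c, y` stand for `φ, ∂φ/∂z₂, ∂²φ/∂z₂², z₂`, and `a', b'` for the `z₂`-derivatives of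
`a, b`, so that `charNum₁Deriv`, `charDenomDeriv` are total `z₂`-derivatives. `charNum₁`,
`charNum₂` are the numerators of (i), (ii) and `eqSix`, `eqSeven` the two alternatives of the
conclusion (equations (6) and (7) of the paper). -/

variable (lam : ℝ)

def charDenom (a b y : ℝ) : ℝ :=
  4 * lam * a ^ 4 * y ^ 2 + b ^ 2 * y ^ 2 + 4 * b * a * y + 4 * a ^ 2

def charNum₁ (a b y : ℝ) : ℝ :=
  b ^ 3 * y + 4 * lam * a ^ 4 * b * y - 4 * lam * a ^ 5 + 3 * b ^ 2 * a

def charNum₂ (a b y : ℝ) : ℝ :=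
  -16 * lam ^ 2 * a ^ 8 * y + 8 * lam * a ^ 4 * b ^ 2 * y - 32 * lam * a ^ 5 * b +
    3 * b ^ 4 * y + 8 * b ^ 3 * a

def eqSix (a b c : ℝ) : ℝ := 3 * b ^ 2 - 2 * a * c - 4 * lam * a ^ 4

def eqSeven (a b y : ℝ) : ℝ :=
  b * (2 * a + y * b) * (y ^ 2 * b ^ 2 + 6 * y * a * b + 12 * a ^ 2) +
    8 * lam * y * a ^ 4 * (2 * lam * y ^ 2 * a ^ 4 + 4 * a ^ 2 + 4 * y * a * b + y ^ 2 * b ^ 2)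

def charDenomDeriv (a b a' b' y : ℝ) : ℝ :=
  16 * lam * a ^ 3 * a' * y ^ 2 + 8 * lam * a ^ 4 * y + 2 * b * b' * y ^ 2 + 2 * b ^ 2 * y +
    4 * b' * a * y + 4 * b * a' * y + 4 * b * a + 8 * a * a'

def charNum₁Deriv (a b a' b' y : ℝ) : ℝ :=
  3 * b ^ 2 * b' * y + b ^ 3 + 16 * lam * a ^ 3 * a' * b * y + 4 * lam * a ^ 4 * b' * y +
    4 * lam * a ^ 4 * b - 20 * lam * a ^ 4 * a' + 6 * b * b' * a + 3 * b ^ 2 * a'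

variable {lam} {a b : ℝ → ℝ} {a' b' y : ℝ}

theorem hasDerivAt_charDenom (ha : HasDerivAt a a' y) (hb : HasDerivAt b b' y) :
    HasDerivAt (fun t => charDenom lam (a t) (b t) t)
      (charDenomDeriv lam (a y) (b y) a' b' y) y := by
  have := (((((ha.pow 4).const_mul (4 * lam)).mul (hasDerivAt_pow 2 y)).add
    ((hb.pow 2).mul (hasDerivAt_pow 2 y))).add
    (((hb.const_mul 4).mul ha).mul (hasDerivAt_id y))).add ((ha.pow 2).const_mul 4)
  refine this.congr_deriv ?_
  simp only [charDenomDeriv, Pi.mul_apply, Pi.pow_apply, id]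
  push_cast
  ring

theorem hasDerivAt_charNum₁ (ha : HasDerivAt a a' y) (hb : HasDerivAt b b' y) :
    HasDerivAt (fun t => charNum₁ lam (a t) (b t) t)
      (charNum₁Deriv lam (a y) (b y) a' b' y) y := by
  have := ((((hb.pow 3).mul (hasDerivAt_id y)).add
    ((((ha.pow 4).const_mul (4 * lam)).mul hb).mul (hasDerivAt_id y))).sub
    ((ha.pow 5).const_mul (4 * lam))).add (((hb.pow 2).const_mul 3).mul ha)
  refine this.congr_deriv ?_
  simp only [charNum₁Deriv, Pi.mul_apply, Pi.pow_apply, id]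
  push_cast
  ring

theorem charNum₂_mul_charDenom (a b c y : ℝ) :
    charNum₂ lam a b y * charDenom lam a b y =
      2 * a * (charNum₁Deriv lam a b b c y * charDenom lam a b y -
        charNum₁ lam a b y * charDenomDeriv lam a b b c y) +
      eqSix lam a b c * eqSeven lam a b y := by
  simp only [charNum₂, charDenom, charNum₁Deriv, charNum₁, charDenomDeriv, eqSix, eqSeven]
  ring

theorem eqSix_mul_eqSeven_eq_zero {x a b c : ℝ} (hx : x ≠ 0) (ha : a ≠ 0)
    (hD : charDenom lam a b y ≠ 0)
    (h : (x * charNum₁Deriv lam a b b c y * charDenom lam a b y -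
        x * charNum₁ lam a b y * charDenomDeriv lam a b b c y) / charDenom lam a b y ^ 2 =
      x * charNum₂ lam a b y / (2 * a * charDenom lam a b y)) :
    eqSix lam a b c * eqSeven lam a b y = 0 := by
  rw [div_eq_div_iff (pow_ne_zero 2 hD) (by positivity)] at h
  have key : x * charDenom lam a b y * (eqSix lam a b c * eqSeven lam a b y) = 0 := by
    linear_combination -h - x * charDenom lam a b y * charNum₂_mul_charDenom a b c y
  simpa [hx, hD] using key

end CharacteristicExpressions

theorem eqSix_mul_eqSeven_eq_zero_of_fst_ne_zero {lam : ℝ} {U : Set (ℝ × ℝ)} {f : ℝ × ℝ → ℝ}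
    {p : ℝ × ℝ} (hU : IsOpen U) (hf : ContDiffOn ℝ 2 f U)
    (h₁ : ∀ q ∈ U, partialFst f q =
      q.1 * charNum₁ lam (f q) (partialSnd f q) q.2 / charDenom lam (f q) (partialSnd f q) q.2)
    (hp : p ∈ U) (hp₁ : p.1 ≠ 0) (hfp : f p ≠ 0)
    (hD : charDenom lam (f p) (partialSnd f p) p.2 ≠ 0)
    (h₂ : partialFst (partialSnd f) p = p.1 * charNum₂ lam (f p) (partialSnd f p) p.2 /
      (2 * f p * charDenom lam (f p) (partialSnd f p) p.2)) :
    eqSix lam (f p) (partialSnd f p) (partialSnd (partialSnd f) p) *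
      eqSeven lam (f p) (partialSnd f p) p.2 = 0 := by
  have hpU : U ∈ 𝓝 p := hU.mem_nhds hp
  have ha : HasDerivAt (fun t => f (p.1, t)) (partialSnd f p) p.2 :=
    ((hf.contDiffAt hpU).differentiableAt (by simp)).hasDerivAt_partialSnd
  have hb : HasDerivAt (fun t => partialSnd f (p.1, t)) (partialSnd (partialSnd f) p) p.2 :=
    (((hf.partialSnd (n := 1) hU).contDiffAt hpU).differentiableAt one_ne_zero
      ).hasDerivAt_partialSnd
  have hquot := ((hasDerivAt_charNum₁ (lam := lam) ha hb).const_mul p.1).div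
    (hasDerivAt_charDenom ha hb) hD
  refine eqSix_mul_eqSeven_eq_zero hp₁ hfp hD ?_
  rw [← hquot.deriv, ← h₂, ← partialSnd_partialFst (hf.contDiffAt hpU)]
  have h₁' : partialFst f =ᶠ[𝓝 p] fun q =>
      q.1 * charNum₁ lam (f q) (partialSnd f q) q.2 / charDenom lam (f q) (partialSnd f q) q.2 :=
    eventually_of_mem hpU h₁
  exact h₁'.partialSnd_eq.symm

/-- If a positive C² function φ(z₁,z₂) satisfies both characterizing first-order
equations (with nonvanishing denominator D), then at every point either equation (6) or
equation (7) of the paper holds. -/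
theorem stmt_4 (lam : ℝ) (U : Set (ℝ × ℝ)) (hU : IsOpen U)
    (φ : ℝ → ℝ → ℝ)
    (hC : ContDiffOn ℝ 2 (fun p : ℝ × ℝ => φ p.1 p.2) U)
    (hpos : ∀ p ∈ U, 0 < φ p.1 p.2)
    (hD : ∀ p ∈ U,
      4 * lam * (φ p.1 p.2) ^ 4 * p.2 ^ 2 + (deriv (φ p.1) p.2) ^ 2 * p.2 ^ 2 +
        4 * deriv (φ p.1) p.2 * φ p.1 p.2 * p.2 + 4 * (φ p.1 p.2) ^ 2 ≠ 0)
    (heq1 : ∀ p ∈ U,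
      deriv (fun s => φ s p.2) p.1 =
        p.1 * ((deriv (φ p.1) p.2) ^ 3 * p.2 +
            4 * lam * (φ p.1 p.2) ^ 4 * deriv (φ p.1) p.2 * p.2 -
            4 * lam * (φ p.1 p.2) ^ 5 + 3 * (deriv (φ p.1) p.2) ^ 2 * φ p.1 p.2) /
          (4 * lam * (φ p.1 p.2) ^ 4 * p.2 ^ 2 + (deriv (φ p.1) p.2) ^ 2 * p.2 ^ 2 +
            4 * deriv (φ p.1) p.2 * φ p.1 p.2 * p.2 + 4 * (φ p.1 p.2) ^ 2))
    (heq2 : ∀ p ∈ U,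
      deriv (fun s => deriv (φ s) p.2) p.1 =
        p.1 * (-16 * lam ^ 2 * (φ p.1 p.2) ^ 8 * p.2 +
            8 * lam * (φ p.1 p.2) ^ 4 * (deriv (φ p.1) p.2) ^ 2 * p.2 -
            32 * lam * (φ p.1 p.2) ^ 5 * deriv (φ p.1) p.2 +
            3 * (deriv (φ p.1) p.2) ^ 4 * p.2 + 8 * (deriv (φ p.1) p.2) ^ 3 * φ p.1 p.2) /
          (2 * φ p.1 p.2 *
            (4 * lam * (φ p.1 p.2) ^ 4 * p.2 ^ 2 + (deriv (φ p.1) p.2) ^ 2 * p.2 ^ 2 +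
              4 * deriv (φ p.1) p.2 * φ p.1 p.2 * p.2 + 4 * (φ p.1 p.2) ^ 2))) :
    ∀ p ∈ U,
      (3 * (deriv (φ p.1) p.2) ^ 2 - 2 * φ p.1 p.2 * deriv (deriv (φ p.1)) p.2 -
          4 * lam * (φ p.1 p.2) ^ 4 = 0) ∨
      (deriv (φ p.1) p.2 * (2 * φ p.1 p.2 + p.2 * deriv (φ p.1) p.2) *
          (p.2 ^ 2 * (deriv (φ p.1) p.2) ^ 2 + 6 * p.2 * φ p.1 p.2 * deriv (φ p.1) p.2 +
            12 * (φ p.1 p.2) ^ 2) +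
        8 * lam * p.2 * (φ p.1 p.2) ^ 4 *
          (2 * lam * p.2 ^ 2 * (φ p.1 p.2) ^ 4 + 4 * (φ p.1 p.2) ^ 2 +
            4 * p.2 * φ p.1 p.2 * deriv (φ p.1) p.2 +
            p.2 ^ 2 * (deriv (φ p.1) p.2) ^ 2) = 0) := by
  let f : ℝ × ℝ → ℝ := fun q => φ q.1 q.2
  let E₆E₇ : ℝ × ℝ → ℝ := fun q =>
    eqSix lam (f q) (partialSnd f q) (partialSnd (partialSnd f) q) *
      eqSeven lam (f q) (partialSnd f q) q.2
  have hcont : ContinuousOn E₆E₇ U := by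
    have hC₁ : ContDiffOn ℝ 1 (partialSnd f) U := hC.partialSnd hU
    have hcont₀ : ContinuousOn f U := hC.continuousOn
    have hcont₁ : ContinuousOn (partialSnd f) U := hC₁.continuousOn
    have hcont₂ : ContinuousOn (partialSnd (partialSnd f)) U :=
      (hC₁.partialSnd (n := 0) hU).continuousOn
    simp only [E₆E₇, eqSix, eqSeven]
    fun_prop
  have hdense : Dense ({0}ᶜ ×ˢ univ : Set (ℝ × ℝ)) := (dense_compl_singleton 0).prod dense_univ
  have hzero : EqOn E₆E₇ (fun _ => 0) U := by
    refine EqOn.of_subset_closure ?_ hcont continuousOn_const inter_subset_left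
      (hdense.open_subset_closure_inter hU)
    rintro q ⟨hq, hq₁, -⟩
    exact eqSix_mul_eqSeven_eq_zero_of_fst_ne_zero hU hC heq1 hq hq₁ (hpos q hq).ne' (hD q hq)
      (heq2 q hq)
  exact fun p hp => mul_eq_zero.mp (hzero hp)
end

section
/- Let I ⊆ (0, ∞) be an open interval and let c₁, c₂ : I → ℝ be C¹ functions with c₁(z) > 0 for all z ∈ I, satisfying for all z ∈ I: z·c₁(z) + c₂(z)²·c₁'(z) = 0 and 3·z·c₁(z)·c₂(z) + c₂(z)³·c₁'(z) + 2·c₁(z)·c₂(z)²·c₂'(z) = 0. Then there exist constants c > 0 and d > 0 and a sign ε ∈ {+1, −1} such that for all z ∈ I: c₂(z) = ε·√(c − z²) and c₁(z) = d·√(c − z²). -/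
/-!
Subtracting `c₂ ·` the first equation from the second leaves `2 c₁ c₂ (c₂ c₂' + z) = 0`, and
`c₂` cannot vanish because `z c₁ > 0`; hence `(c₂² + z²)' = 0`, i.e. `c₂² = c - z²`. Feeding
`c₂' = -z / c₂` and `c₁' = -z c₁ / c₂²` into the Wronskian shows `c₁ / c₂` is a constant `k`,
so `c₂ = c₁ / k` has the sign of `k` and `c₁ = |k| √(c - z²)`.
-/

open Set

theorem eq_of_hasDerivAt_zero_of_mem_Ioo {f : ℝ → ℝ} {a b : ℝ}
    (hf : ∀ x ∈ Ioo a b, HasDerivAt f 0 x) {x y : ℝ} (hx : x ∈ Ioo a b) (hy : y ∈ Ioo a b) :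
    f x = f y :=
  isOpen_Ioo.is_const_of_deriv_eq_zero isPreconnected_Ioo
    (fun x hx => (hf x hx).differentiableAt.differentiableWithinAt) (fun x hx => (hf x hx).deriv)
    hx hy

theorem hasDerivAt_sq_add_sq_of_mul_eq_neg {f : ℝ → ℝ} {f' x : ℝ} (hf : HasDerivAt f f' x)
    (h : f x * f' = -x) : HasDerivAt (fun y => f y ^ 2 + y ^ 2) 0 x := by
  refine ((hf.pow 2).add (hasDerivAt_pow 2 x)).congr_deriv ?_
  push_cast
  linear_combination 2 * h

theorem hasDerivAt_div_of_mul_eq_mul {f g : ℝ → ℝ} {f' g' x : ℝ} (hf : HasDerivAt f f' x)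
    (hg : HasDerivAt g g' x) (hgx : g x ≠ 0) (h : f' * g x = f x * g') :
    HasDerivAt (fun y => f y / g y) 0 x := by
  refine (hf.div hg hgx).congr_deriv ?_
  rw [h, sub_self, zero_div]

theorem eq_sign_mul_sqrt_of_sq_eq {k v s : ℝ} (hv : v ^ 2 = s) (hkv : 0 < k * v) :
    v = Real.sign k * √s ∧ k * v = |k| * √s := by
  rw [← hv, Real.sqrt_sq_eq_abs]
  rcases lt_or_gt_of_ne (left_ne_zero_of_mul hkv.ne') with hk | hk
  · have hv : v < 0 := neg_of_mul_pos_right hkv hk.le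
    simp [Real.sign_of_neg hk, abs_of_neg hk, abs_of_neg hv]
  · have hv : 0 < v := pos_of_mul_pos_right hkv hk.le
    simp [Real.sign_of_pos hk, abs_of_pos hk, abs_of_pos hv]

section

variable {c₁ c₂ : ℝ → ℝ} {z : ℝ}

theorem ne_zero_of_mul_add_sq_mul_deriv_eq_zero (hz : 0 < z) (hc₁ : 0 < c₁ z)
    (h1 : z * c₁ z + c₂ z ^ 2 * deriv c₁ z = 0) : c₂ z ≠ 0 := by
  intro h
  rw [h] at h1
  nlinarith [mul_pos hz hc₁]

theorem mul_deriv_eq_neg (hc₁ : c₁ z ≠ 0) (hc₂ : c₂ z ≠ 0)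
    (h1 : z * c₁ z + c₂ z ^ 2 * deriv c₁ z = 0)
    (h2 : 3 * z * c₁ z * c₂ z + c₂ z ^ 3 * deriv c₁ z + 2 * c₁ z * c₂ z ^ 2 * deriv c₂ z = 0) :
    c₂ z * deriv c₂ z = -z := by
  have : 2 * c₁ z * c₂ z * (c₂ z * deriv c₂ z + z) = 0 := by
    linear_combination h2 - c₂ z * h1
  simpa [hc₁, hc₂, add_eq_zero_iff_eq_neg] using this

theorem deriv_mul_eq_mul_deriv (hc₂ : c₂ z ≠ 0) (h1 : z * c₁ z + c₂ z ^ 2 * deriv c₁ z = 0)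
    (hc₂' : c₂ z * deriv c₂ z = -z) : deriv c₁ z * c₂ z = c₁ z * deriv c₂ z := by
  have : c₂ z * (deriv c₁ z * c₂ z - c₁ z * deriv c₂ z) = 0 := by
    linear_combination h1 - c₁ z * hc₂'
  simpa [hc₂, sub_eq_zero] using this

end

/-- Positive C¹ solutions on I ⊆ (0,∞) of z·c₁ + c₂²·c₁' = 0 and
3z·c₁·c₂ + c₂³·c₁' + 2c₁·c₂²·c₂' = 0 are c₂ = ±√(c−z²), c₁ = d√(c−z²). -/
theorem stmt_7 (a b : ℝ) (ha : 0 ≤ a) (c₁ c₂ : ℝ → ℝ)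
    (hc₁ : ContDiffOn ℝ 1 c₁ (Set.Ioo a b)) (hc₂ : ContDiffOn ℝ 1 c₂ (Set.Ioo a b))
    (hpos : ∀ z ∈ Set.Ioo a b, 0 < c₁ z)
    (h1 : ∀ z ∈ Set.Ioo a b, z * c₁ z + (c₂ z) ^ 2 * deriv c₁ z = 0)
    (h2 : ∀ z ∈ Set.Ioo a b,
      3 * z * c₁ z * c₂ z + (c₂ z) ^ 3 * deriv c₁ z +
        2 * c₁ z * (c₂ z) ^ 2 * deriv c₂ z = 0) :
    ∃ c > (0 : ℝ), ∃ d > (0 : ℝ), ∃ ε : ℝ, (ε = 1 ∨ ε = -1) ∧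
      ∀ z ∈ Set.Ioo a b,
        c₂ z = ε * Real.sqrt (c - z ^ 2) ∧ c₁ z = d * Real.sqrt (c - z ^ 2) := by
  rcases (Ioo a b).eq_empty_or_nonempty with hI | ⟨z₀, hz₀⟩
  · exact ⟨1, one_pos, 1, one_pos, 1, .inl rfl, by simp [hI]⟩
  have hd₁ : ∀ z ∈ Ioo a b, HasDerivAt c₁ (deriv c₁ z) z := fun z hz =>
    ((hc₁.differentiableOn one_ne_zero z hz).differentiableAt (isOpen_Ioo.mem_nhds hz)).hasDerivAt
  have hd₂ : ∀ z ∈ Ioo a b, HasDerivAt c₂ (deriv c₂ z) z := fun z hz =>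
    ((hc₂.differentiableOn one_ne_zero z hz).differentiableAt (isOpen_Ioo.mem_nhds hz)).hasDerivAt
  have hne : ∀ z ∈ Ioo a b, c₂ z ≠ 0 := fun z hz =>
    ne_zero_of_mul_add_sq_mul_deriv_eq_zero (ha.trans_lt hz.1) (hpos z hz) (h1 z hz)
  have hc₂' : ∀ z ∈ Ioo a b, c₂ z * deriv c₂ z = -z := fun z hz =>
    mul_deriv_eq_neg (hpos z hz).ne' (hne z hz) (h1 z hz) (h2 z hz)
  have hcircle : ∀ z ∈ Ioo a b, c₂ z ^ 2 + z ^ 2 = c₂ z₀ ^ 2 + z₀ ^ 2 :=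
    fun z hz => eq_of_hasDerivAt_zero_of_mem_Ioo
      (fun x hx => hasDerivAt_sq_add_sq_of_mul_eq_neg (hd₂ x hx) (hc₂' x hx)) hz hz₀
  have hratio : ∀ z ∈ Ioo a b, c₁ z / c₂ z = c₁ z₀ / c₂ z₀ :=
    fun z hz => eq_of_hasDerivAt_zero_of_mem_Ioo (f := fun x => c₁ x / c₂ x)
      (fun x hx => hasDerivAt_div_of_mul_eq_mul (hd₁ x hx) (hd₂ x hx) (hne x hx)
        (deriv_mul_eq_mul_deriv (hne x hx) (h1 x hx) (hc₂' x hx))) hz hz₀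
  set k := c₁ z₀ / c₂ z₀
  have hk : k ≠ 0 := div_ne_zero (hpos z₀ hz₀).ne' (hne z₀ hz₀)
  refine ⟨c₂ z₀ ^ 2 + z₀ ^ 2, by have := hne z₀ hz₀; positivity, |k|, abs_pos.2 hk, Real.sign k,
    (Real.sign_apply_eq_of_ne_zero k hk).symm, fun z hz => ?_⟩
  have hc₁k : c₁ z = k * c₂ z := (div_eq_iff (hne z hz)).1 (hratio z hz)
  rw [hc₁k]
  exact eq_sign_mul_sqrt_of_sq_eq (by linarith [hcircle z hz]) (hc₁k ▸ hpos z hz)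
end

section
/- Let I ⊆ ℝ be an open interval, let d₁ ∈ ℝ, and let c₁ : I → ℝ be a C¹ function with c₁(z) > 0 for all z ∈ I satisfying c₁'(z)·(c₁(z)⁴ + d₁²) = z·c₁(z)³ on I. Then there exists a constant d₂ ∈ ℝ such that for all z ∈ I: c₁(z)² − d₁²/c₁(z)² = z² + 2d₂; equivalently, c₁(z)² = ( z² + 2d₂ + √((z² + 2d₂)² + 4d₁²) ) / 2. -/
/-!
Dividing the equation by `c₁³` and multiplying by `2` turns it into
`(c₁² - d₁²/c₁²)' = (2 c₁ + 2 d₁²/c₁³) c₁' = 2 z`, so `c₁² - d₁²/c₁² - z²` has zero derivative and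
is constant on the interval. Solving the resulting quadratic `u² - s u - d₁² = 0` for `u = c₁² > 0`
gives the closed form.
-/

lemma hasDerivAt_sq_sub_div_sq_sub_sq {c : ℝ → ℝ} {c' d z : ℝ} (hc : HasDerivAt c c' z)
    (hcz : c z ≠ 0) (hode : c' * (c z ^ 4 + d ^ 2) = z * c z ^ 3) :
    HasDerivAt (fun x => c x ^ 2 - d ^ 2 / c x ^ 2 - x ^ 2) 0 z := by
  have hsq : HasDerivAt (fun x => c x ^ 2) (2 * c z * c') z := by
    simpa [mul_comm] using hc.fun_pow 2
  have hdiv := (hasDerivAt_const z (d ^ 2)).div hsq (pow_ne_zero 2 hcz)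
  have hid : HasDerivAt (fun x : ℝ => x ^ 2) (2 * z) z := by
    simpa using (hasDerivAt_id z).fun_pow 2
  refine ((hsq.sub hdiv).sub hid).congr_deriv ?_
  calc 2 * c z * c' - (0 * c z ^ 2 - d ^ 2 * (2 * c z * c')) / (c z ^ 2) ^ 2 - 2 * z
      = 2 / c z ^ 3 * (c' * (c z ^ 4 + d ^ 2) - z * c z ^ 3) := by field_simp; ring
    _ = 0 := by rw [hode, sub_self, mul_zero]

lemma eq_half_add_sqrt_of_sub_div_eq {u d s : ℝ} (hu : 0 < u) (h : u - d ^ 2 / u = s) :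
    u = (s + √(s ^ 2 + 4 * d ^ 2)) / 2 := by
  have hroot : 0 ≤ 2 * u - s := by
    rw [← h]
    linarith [div_nonneg (sq_nonneg d) hu.le]
  have hdisc : s ^ 2 + 4 * d ^ 2 = (2 * u - s) ^ 2 := by
    rw [← h]
    field_simp
    ring
  rw [hdisc, Real.sqrt_sq hroot]
  ring

/-- A positive C¹ solution of c₁'·(c₁⁴ + d₁²) = z·c₁³ satisfies
c₁² − d₁²/c₁² = z² + 2d₂ for a constant d₂, equivalently
c₁² = (z² + 2d₂ + √((z² + 2d₂)² + 4d₁²))/2. -/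
theorem stmt_12 (a b d₁ : ℝ) (c₁ : ℝ → ℝ)
    (hc₁ : ContDiffOn ℝ 1 c₁ (Set.Ioo a b))
    (hpos : ∀ z ∈ Set.Ioo a b, 0 < c₁ z)
    (hode : ∀ z ∈ Set.Ioo a b, deriv c₁ z * ((c₁ z) ^ 4 + d₁ ^ 2) = z * (c₁ z) ^ 3) :
    ∃ d₂ : ℝ, ∀ z ∈ Set.Ioo a b,
      (c₁ z) ^ 2 - d₁ ^ 2 / (c₁ z) ^ 2 = z ^ 2 + 2 * d₂ ∧
      (c₁ z) ^ 2 = (z ^ 2 + 2 * d₂ + Real.sqrt ((z ^ 2 + 2 * d₂) ^ 2 + 4 * d₁ ^ 2)) / 2 := by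
  have hderiv : ∀ z ∈ Set.Ioo a b,
      HasDerivAt (fun x => c₁ x ^ 2 - d₁ ^ 2 / c₁ x ^ 2 - x ^ 2) 0 z := fun z hz =>
    hasDerivAt_sq_sub_div_sq_sub_sq
      ((hc₁.differentiableOn one_ne_zero z hz).differentiableAt
        (isOpen_Ioo.mem_nhds hz)).hasDerivAt
      (hpos z hz).ne' (hode z hz)
  obtain ⟨C, hC⟩ := isOpen_Ioo.exists_is_const_of_deriv_eq_zero isPreconnected_Ioo
    (fun z hz => (hderiv z hz).differentiableAt.differentiableWithinAt)
    (fun z hz => (hderiv z hz).deriv)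
  refine ⟨C / 2, fun z hz => ?_⟩
  have hfirst : c₁ z ^ 2 - d₁ ^ 2 / c₁ z ^ 2 = z ^ 2 + 2 * (C / 2) := by
    linarith [hC z hz]
  exact ⟨hfirst, eq_half_add_sqrt_of_sub_div_eq (pow_pos (hpos z hz) 2) hfirst⟩
end

section
/- (Classification of solutions, K = 1 case.) Let I ⊆ ℝ be an open interval and let c₁, c₂ : I → ℝ be C¹ functions with c₁(z) ≠ 0 for all z ∈ I, satisfying for all z ∈ I the system: (i) c₁'·(c₁² + c₂²) = z·c₁; (ii) c₁'·c₂·(c₁² + c₂²) − c₁·c₂'·(c₁² + c₂²) − 2z·c₁·c₂ = 0; (iii) c₁'·(c₁⁴ − c₂⁴) + 2c₂'·c₁·c₂·(c₁² + c₂²) + 3z·c₁·c₂² − z·c₁³ = 0. Then there exist constants d₁, d₂ ∈ ℝ such that for all z ∈ I: c₁(z)·c₂(z) = d₁ and c₁(z)² − c₂(z)² = z² + 2d₂; consequently c₁(z)² = ( 2d₂ + z² + √((2d₂ + z²)² + 4d₁²) ) / 2 when c₁ > 0, and in the case d₁ = 0 one has c₂ ≡ 0 and c₁(z)² = z² + 2d₂.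 -/
/-!
Multiplying (i) by `c₂` and subtracting (ii) leaves `c₁ (c₂' P + z c₂) = 0` with
`P = c₁² + c₂²`, so `c₂' P = -z c₂`. Together with (i) this gives `(c₁ c₂)' P = 0` and
`(c₁² - c₂² - z²)' P = 0`; as `P > 0`, both functions are constant on the interval. The formula
for `c₁²` follows from `(c₁² + c₂²)² = (c₁² - c₂²)² + 4 (c₁ c₂)²`.
-/

open Set

lemma exists_const_of_hasDerivAt_zero {s : Set ℝ} (hs : IsOpen s) (hs' : IsPreconnected s)
    {f : ℝ → ℝ} (hf : ∀ z ∈ s, HasDerivAt f 0 z) : ∃ d, ∀ z ∈ s, f z = d :=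
  hs.exists_is_const_of_deriv_eq_zero hs'
    (fun z hz => (hf z hz).differentiableAt.differentiableWithinAt)
    (fun z hz => (hf z hz).deriv)

lemma first_integrals_of_system {u v u' v' z : ℝ} (hu : u ≠ 0)
    (h1 : u' * (u ^ 2 + v ^ 2) = z * u)
    (h2 : u' * v * (u ^ 2 + v ^ 2) - u * v' * (u ^ 2 + v ^ 2) - 2 * z * u * v = 0) :
    u' * v + u * v' = 0 ∧ u * u' - v * v' = z := by
  have hP : u ^ 2 + v ^ 2 ≠ 0 := by positivity
  have hv' : v' * (u ^ 2 + v ^ 2) = -z * v :=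
    mul_left_cancel₀ hu (by linear_combination v * h1 - h2)
  exact ⟨mul_right_cancel₀ hP (by linear_combination v * h1 + u * hv'),
    mul_right_cancel₀ hP (by linear_combination u * h1 - v * hv')⟩

lemma sq_eq_of_mul_eq_of_sq_sub_sq_eq {u v d s : ℝ} (hd : u * v = d)
    (hs : u ^ 2 - v ^ 2 = s) : u ^ 2 = (s + √(s ^ 2 + 4 * d ^ 2)) / 2 := by
  have hroot : √(s ^ 2 + 4 * d ^ 2) = u ^ 2 + v ^ 2 := by
    rw [← hd, ← hs, show (u ^ 2 - v ^ 2) ^ 2 + 4 * (u * v) ^ 2 = (u ^ 2 + v ^ 2) ^ 2 by ring]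
    exact Real.sqrt_sq (by positivity)
  rw [hroot, ← hs]
  ring

theorem stmt_13_general (a b : ℝ) (c₁ c₂ : ℝ → ℝ)
    (hc₁ : ContDiffOn ℝ 1 c₁ (Set.Ioo a b)) (hc₂ : ContDiffOn ℝ 1 c₂ (Set.Ioo a b))
    (hne : ∀ z ∈ Set.Ioo a b, c₁ z ≠ 0)
    (h1 : ∀ z ∈ Set.Ioo a b, deriv c₁ z * ((c₁ z) ^ 2 + (c₂ z) ^ 2) = z * c₁ z)
    (h2 : ∀ z ∈ Set.Ioo a b,
      deriv c₁ z * c₂ z * ((c₁ z) ^ 2 + (c₂ z) ^ 2) -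
        c₁ z * deriv c₂ z * ((c₁ z) ^ 2 + (c₂ z) ^ 2) - 2 * z * c₁ z * c₂ z = 0) :
    ∃ d₁ d₂ : ℝ,
      (∀ z ∈ Set.Ioo a b,
        c₁ z * c₂ z = d₁ ∧ (c₁ z) ^ 2 - (c₂ z) ^ 2 = z ^ 2 + 2 * d₂) ∧
      ((∀ z ∈ Set.Ioo a b, 0 < c₁ z) → ∀ z ∈ Set.Ioo a b,
        (c₁ z) ^ 2 =
          (2 * d₂ + z ^ 2 + Real.sqrt ((2 * d₂ + z ^ 2) ^ 2 + 4 * d₁ ^ 2)) / 2) ∧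
      (d₁ = 0 → ∀ z ∈ Set.Ioo a b, c₂ z = 0 ∧ (c₁ z) ^ 2 = z ^ 2 + 2 * d₂) := by
  have hderiv {c : ℝ → ℝ} (hc : ContDiffOn ℝ 1 c (Ioo a b)) (z : ℝ) (hz : z ∈ Ioo a b) :
      HasDerivAt c (deriv c z) z :=
    ((hc.differentiableOn one_ne_zero).differentiableAt (isOpen_Ioo.mem_nhds hz)).hasDerivAt
  have hint z (hz : z ∈ Ioo a b) := first_integrals_of_system (hne z hz) (h1 z hz) (h2 z hz)
  obtain ⟨d₁, hprod⟩ := exists_const_of_hasDerivAt_zero (f := fun z => c₁ z * c₂ z)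
    isOpen_Ioo isPreconnected_Ioo fun z hz => by
      simpa only [(hint z hz).1] using (hderiv hc₁ z hz).fun_mul (hderiv hc₂ z hz)
  obtain ⟨e, hdiff⟩ := exists_const_of_hasDerivAt_zero
    (f := fun z => c₁ z ^ 2 - c₂ z ^ 2 - z ^ 2) isOpen_Ioo isPreconnected_Ioo fun z hz =>
      (((hderiv hc₁ z hz).fun_pow 2).fun_sub ((hderiv hc₂ z hz).fun_pow 2)).fun_sub
        (hasDerivAt_pow 2 z) |>.congr_deriv (by linear_combination 2 * (hint z hz).2)
  have hinv z (hz : z ∈ Ioo a b) :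
      c₁ z * c₂ z = d₁ ∧ c₁ z ^ 2 - c₂ z ^ 2 = z ^ 2 + 2 * (e / 2) :=
    ⟨hprod z hz, by linear_combination hdiff z hz⟩
  refine ⟨d₁, e / 2, hinv, fun _ z hz => ?_, fun hd₁ z hz => ?_⟩
  · exact sq_eq_of_mul_eq_of_sq_sub_sq_eq (hinv z hz).1 (by linear_combination (hinv z hz).2)
  · obtain ⟨hprod_z, hdiff_z⟩ := hinv z hz
    have hc₂z : c₂ z = 0 := (mul_eq_zero.1 (hprod_z.trans hd₁)).resolve_left (hne z hz)
    exact ⟨hc₂z, by simpa [hc₂z] using hdiff_z⟩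

/-- Classification of solutions of the system (12) (K = 1 case): there are
constants d₁, d₂ with c₁c₂ = d₁ and c₁² − c₂² = z² + 2d₂; when c₁ > 0,
c₁² = (2d₂ + z² + √((2d₂ + z²)² + 4d₁²))/2; and when d₁ = 0, c₂ ≡ 0 and c₁² = z² + 2d₂. -/
theorem stmt_13 (a b : ℝ) (c₁ c₂ : ℝ → ℝ)
    (hc₁ : ContDiffOn ℝ 1 c₁ (Set.Ioo a b)) (hc₂ : ContDiffOn ℝ 1 c₂ (Set.Ioo a b))
    (hne : ∀ z ∈ Set.Ioo a b, c₁ z ≠ 0)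
    (h1 : ∀ z ∈ Set.Ioo a b, deriv c₁ z * ((c₁ z) ^ 2 + (c₂ z) ^ 2) = z * c₁ z)
    (h2 : ∀ z ∈ Set.Ioo a b,
      deriv c₁ z * c₂ z * ((c₁ z) ^ 2 + (c₂ z) ^ 2) -
        c₁ z * deriv c₂ z * ((c₁ z) ^ 2 + (c₂ z) ^ 2) - 2 * z * c₁ z * c₂ z = 0)
    (h3 : ∀ z ∈ Set.Ioo a b,
      deriv c₁ z * ((c₁ z) ^ 4 - (c₂ z) ^ 4) +
        2 * deriv c₂ z * c₁ z * c₂ z * ((c₁ z) ^ 2 + (c₂ z) ^ 2) +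
        3 * z * c₁ z * (c₂ z) ^ 2 - z * (c₁ z) ^ 3 = 0) :
    ∃ d₁ d₂ : ℝ,
      (∀ z ∈ Set.Ioo a b,
        c₁ z * c₂ z = d₁ ∧ (c₁ z) ^ 2 - (c₂ z) ^ 2 = z ^ 2 + 2 * d₂) ∧
      ((∀ z ∈ Set.Ioo a b, 0 < c₁ z) → ∀ z ∈ Set.Ioo a b,
        (c₁ z) ^ 2 =
          (2 * d₂ + z ^ 2 + Real.sqrt ((2 * d₂ + z ^ 2) ^ 2 + 4 * d₁ ^ 2)) / 2) ∧
      (d₁ = 0 → ∀ z ∈ Set.Ioo a b, c₂ z = 0 ∧ (c₁ z) ^ 2 = z ^ 2 + 2 * d₂) :=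
  stmt_13_general a b c₁ c₂ hc₁ hc₂ hne h1 h2
end

section
/- (Classification of solutions, K = −1 case.) Let I ⊆ ℝ be an open interval and let c₁, c₂ : I → ℝ be C¹ functions with c₁(z) ≠ 0 and c₁(z)² ≠ c₂(z)² for all z ∈ I, satisfying for all z ∈ I the system: (i) −z·c₁ + c₁'·c₂² − c₁'·c₁² = 0; (ii) −2c₁'c₁²c₂ − 2c₁c₂²c₂' + 2c₁'c₂³ + 2c₁³c₂' − 4z·c₁c₂ = 0; (iii) c₁'c₂⁴ − 2c₁c₂³c₂' + 2c₁³c₂c₂' − 3z·c₁c₂² − c₁⁴c₁' − z·c₁³ = 0. Then there exist constants d₁, d₂ ∈ ℝ such that for all z ∈ I: c₁(z)·c₂(z) = d₁ and c₁(z)² + c₂(z)² = 2d₂ − z²; consequently, when c₁ > 0 and c₁² > c₂², c₁(z)² = ( 2d₂ − z² + √((2d₂ − z²)² − 4d₁²) ) / 2 and c₂(z)² = ( 2d₂ − z² − √((2d₂ − z²)² − 4d₁²) ) / 2, and in the case d₁ = 0 one has c₂ ≡ 0 and c₁(z)² = 2d₂ − z². -/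
/-! Equations (i) and (ii) form a triangular linear system in `(c₁', c₂')` whose pivots
`c₂² - c₁²` and `2 c₁ (c₁² - c₂²)` do not vanish; solving it gives `c₁' (c₂² - c₁²) = z c₁`
and `c₂' (c₂² - c₁²) = -z c₂`. Hence `(c₁ c₂)' = 0` and `(c₁² + c₂² + z²)' = 0`, so both are
constant on the interval, and `c₁²`, `c₂²` are the two roots of `X² - (2d₂ - z²) X + d₁²`. -/

open Set

lemma mul_sq_sub_sq_eq_of_system {K : Type*} [Field K] [CharZero K] {z u v u' v' : K}
    (hu : u ≠ 0) (e1 : -(z * u) + u' * v ^ 2 - u' * u ^ 2 = 0)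
    (e2 : -2 * u' * u ^ 2 * v - 2 * u * v ^ 2 * v' + 2 * u' * v ^ 3 + 2 * u ^ 3 * v' -
      4 * z * u * v = 0) :
    u' * (v ^ 2 - u ^ 2) = z * u ∧ v' * (v ^ 2 - u ^ 2) = -(z * v) := by
  have hu' : u' * (v ^ 2 - u ^ 2) = z * u := by linear_combination e1
  refine ⟨hu', mul_left_cancel₀ (mul_ne_zero two_ne_zero hu) ?_⟩
  linear_combination 2 * v * hu' - e2

lemma mul_add_mul_eq_zero_of_system {K : Type*} [Field K] [CharZero K] {z u v u' v' : K}
    (hu : u ≠ 0) (huv : u ^ 2 ≠ v ^ 2) (e1 : -(z * u) + u' * v ^ 2 - u' * u ^ 2 = 0)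
    (e2 : -2 * u' * u ^ 2 * v - 2 * u * v ^ 2 * v' + 2 * u' * v ^ 3 + 2 * u ^ 3 * v' -
      4 * z * u * v = 0) :
    u' * v + u * v' = 0 ∧ u * u' + v * v' + z = 0 := by
  obtain ⟨hu', hv'⟩ := mul_sq_sub_sq_eq_of_system hu e1 e2
  have hD : v ^ 2 - u ^ 2 ≠ 0 := sub_ne_zero.mpr huv.symm
  constructor
  · refine (mul_eq_zero.mp ?_).resolve_right hD
    linear_combination v * hu' + u * hv'
  · refine (mul_eq_zero.mp ?_).resolve_right hD
    linear_combination u * hu' + v * hv'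

lemma sq_eq_of_mul_eq_of_sq_add_sq_eq {u v p s : ℝ} (hp : u * v = p) (hs : u ^ 2 + v ^ 2 = s)
    (hvu : v ^ 2 ≤ u ^ 2) :
    u ^ 2 = (s + √(s ^ 2 - 4 * p ^ 2)) / 2 ∧ v ^ 2 = (s - √(s ^ 2 - 4 * p ^ 2)) / 2 := by
  have hdisc : s ^ 2 - 4 * p ^ 2 = (u ^ 2 - v ^ 2) ^ 2 := by rw [← hs, ← hp]; ring
  rw [hdisc, Real.sqrt_sq (sub_nonneg.mpr hvu)]
  constructor <;> linarith

theorem stmt_16_general (a b : ℝ) (c₁ c₂ : ℝ → ℝ)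
    (hc₁ : ContDiffOn ℝ 1 c₁ (Set.Ioo a b)) (hc₂ : ContDiffOn ℝ 1 c₂ (Set.Ioo a b))
    (hne : ∀ z ∈ Set.Ioo a b, c₁ z ≠ 0)
    (hne2 : ∀ z ∈ Set.Ioo a b, (c₁ z) ^ 2 ≠ (c₂ z) ^ 2)
    (h1 : ∀ z ∈ Set.Ioo a b,
      -(z * c₁ z) + deriv c₁ z * (c₂ z) ^ 2 - deriv c₁ z * (c₁ z) ^ 2 = 0)
    (h2 : ∀ z ∈ Set.Ioo a b,
      -2 * deriv c₁ z * (c₁ z) ^ 2 * c₂ z - 2 * c₁ z * (c₂ z) ^ 2 * deriv c₂ z +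
        2 * deriv c₁ z * (c₂ z) ^ 3 + 2 * (c₁ z) ^ 3 * deriv c₂ z -
        4 * z * c₁ z * c₂ z = 0) :
    ∃ d₁ d₂ : ℝ,
      (∀ z ∈ Set.Ioo a b,
        c₁ z * c₂ z = d₁ ∧ (c₁ z) ^ 2 + (c₂ z) ^ 2 = 2 * d₂ - z ^ 2) ∧
      ((∀ z ∈ Set.Ioo a b, 0 < c₁ z ∧ (c₂ z) ^ 2 < (c₁ z) ^ 2) →
        ∀ z ∈ Set.Ioo a b,
          (c₁ z) ^ 2 =
            (2 * d₂ - z ^ 2 + Real.sqrt ((2 * d₂ - z ^ 2) ^ 2 - 4 * d₁ ^ 2)) / 2 ∧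
          (c₂ z) ^ 2 =
            (2 * d₂ - z ^ 2 - Real.sqrt ((2 * d₂ - z ^ 2) ^ 2 - 4 * d₁ ^ 2)) / 2) ∧
      (d₁ = 0 → ∀ z ∈ Set.Ioo a b, c₂ z = 0 ∧ (c₁ z) ^ 2 = 2 * d₂ - z ^ 2) := by
  have hdiff₁ := hc₁.differentiableOn one_ne_zero
  have hdiff₂ := hc₂.differentiableOn one_ne_zero
  have hderiv : ∀ z ∈ Ioo a b, HasDerivAt c₁ (deriv c₁ z) z ∧ HasDerivAt c₂ (deriv c₂ z) z :=
    fun z hz ↦ ⟨((hdiff₁ z hz).differentiableAt (isOpen_Ioo.mem_nhds hz)).hasDerivAt,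
      ((hdiff₂ z hz).differentiableAt (isOpen_Ioo.mem_nhds hz)).hasDerivAt⟩
  have key z (hz : z ∈ Ioo a b) :=
    mul_add_mul_eq_zero_of_system (hne z hz) (hne2 z hz) (h1 z hz) (h2 z hz)
  obtain ⟨d₁, hprod⟩ := isOpen_Ioo.exists_is_const_of_deriv_eq_zero
    (f := fun z ↦ c₁ z * c₂ z) isPreconnected_Ioo (hdiff₁.mul hdiff₂) fun z hz ↦ by
      rw [((hderiv z hz).1.fun_mul (hderiv z hz).2).deriv]
      exact (key z hz).1
  obtain ⟨C, hsum⟩ := isOpen_Ioo.exists_is_const_of_deriv_eq_zero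
    (f := fun z ↦ c₁ z ^ 2 + c₂ z ^ 2 + z ^ 2) isPreconnected_Ioo
    (((hdiff₁.pow 2).add (hdiff₂.pow 2)).add (differentiableOn_pow 2)) fun z hz ↦ by
      rw [((((hderiv z hz).1.fun_pow 2).fun_add ((hderiv z hz).2.fun_pow 2)).fun_add
        (hasDerivAt_pow 2 z)).deriv, Pi.zero_apply]
      linear_combination 2 * (key z hz).2
  have hP : ∀ z ∈ Ioo a b, c₁ z * c₂ z = d₁ ∧ c₁ z ^ 2 + c₂ z ^ 2 = 2 * (C / 2) - z ^ 2 :=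
    fun z hz ↦ ⟨hprod z hz, by linear_combination hsum z hz⟩
  refine ⟨d₁, C / 2, hP, fun hpos z hz ↦ ?_, fun hd z hz ↦ ?_⟩
  · exact sq_eq_of_mul_eq_of_sq_add_sq_eq (hP z hz).1 (hP z hz).2 (hpos z hz).2.le
  · have hc₂z : c₂ z = 0 := (mul_eq_zero.mp ((hP z hz).1.trans hd)).resolve_left (hne z hz)
    simpa [hc₂z] using (hP z hz).2

/-- Classification of solutions, K = −1 case: there are constants d₁, d₂ with
c₁c₂ = d₁ and c₁² + c₂² = 2d₂ − z²; when c₁ > 0 and c₁² > c₂²,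
c₁² = (2d₂ − z² + √((2d₂ − z²)² − 4d₁²))/2 and c₂² = (2d₂ − z² − √((2d₂ − z²)² − 4d₁²))/2;
and when d₁ = 0, c₂ ≡ 0 and c₁² = 2d₂ − z². -/
theorem stmt_16 (a b : ℝ) (c₁ c₂ : ℝ → ℝ)
    (hc₁ : ContDiffOn ℝ 1 c₁ (Set.Ioo a b)) (hc₂ : ContDiffOn ℝ 1 c₂ (Set.Ioo a b))
    (hne : ∀ z ∈ Set.Ioo a b, c₁ z ≠ 0)
    (hne2 : ∀ z ∈ Set.Ioo a b, (c₁ z) ^ 2 ≠ (c₂ z) ^ 2)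
    (h1 : ∀ z ∈ Set.Ioo a b,
      -(z * c₁ z) + deriv c₁ z * (c₂ z) ^ 2 - deriv c₁ z * (c₁ z) ^ 2 = 0)
    (h2 : ∀ z ∈ Set.Ioo a b,
      -2 * deriv c₁ z * (c₁ z) ^ 2 * c₂ z - 2 * c₁ z * (c₂ z) ^ 2 * deriv c₂ z +
        2 * deriv c₁ z * (c₂ z) ^ 3 + 2 * (c₁ z) ^ 3 * deriv c₂ z -
        4 * z * c₁ z * c₂ z = 0)
    (h3 : ∀ z ∈ Set.Ioo a b,
      deriv c₁ z * (c₂ z) ^ 4 - 2 * c₁ z * (c₂ z) ^ 3 * deriv c₂ z +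
        2 * (c₁ z) ^ 3 * c₂ z * deriv c₂ z - 3 * z * c₁ z * (c₂ z) ^ 2 -
        (c₁ z) ^ 4 * deriv c₁ z - z * (c₁ z) ^ 3 = 0) :
    ∃ d₁ d₂ : ℝ,
      (∀ z ∈ Set.Ioo a b,
        c₁ z * c₂ z = d₁ ∧ (c₁ z) ^ 2 + (c₂ z) ^ 2 = 2 * d₂ - z ^ 2) ∧
      ((∀ z ∈ Set.Ioo a b, 0 < c₁ z ∧ (c₂ z) ^ 2 < (c₁ z) ^ 2) →
        ∀ z ∈ Set.Ioo a b,
          (c₁ z) ^ 2 =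
            (2 * d₂ - z ^ 2 + Real.sqrt ((2 * d₂ - z ^ 2) ^ 2 - 4 * d₁ ^ 2)) / 2 ∧
          (c₂ z) ^ 2 =
            (2 * d₂ - z ^ 2 - Real.sqrt ((2 * d₂ - z ^ 2) ^ 2 - 4 * d₁ ^ 2)) / 2) ∧
      (d₁ = 0 → ∀ z ∈ Set.Ioo a b, c₂ z = 0 ∧ (c₁ z) ^ 2 = 2 * d₂ - z ^ 2) :=
  stmt_16_general a b c₁ c₂ hc₁ hc₂ hne hne2 h1 h2
end

section
/- Let n ≥ 2 and let x, y ∈ ℝⁿ with y ≠ 0, and write r := |x|, u := |y|, v := ⟨x,y⟩ (Euclidean norm and inner product). Let φ = φ(r, u, v) be a C² function defined on a neighborhood of (r, u, v) in ℝ × (0,∞) × ℝ that is positively homogeneous of degree 1 in (u, v), i.e. φ(r, tu, tv) = t·φ(r, u, v) for all t > 0. Define the n×n real matrix g with entries g_{ij} := (φ·φ_u/u)·δ_{ij} + (φ_v² + φ·φ_{vv})·x_i·x_j + ( (φ_u² + φ·φ_{uu})/u² − φ·φ_u/u³ )·y_i·y_j + ( (φ_u·φ_v + φ·φ_{uv})/u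 )·(x_i·y_j + x_j·y_i), where all derivatives of φ are evaluated at (r, u, v) = (|x|, |y|, ⟨x,y⟩). Then det(g) = (φ/u)^{n+1}·φ_u^{n−2}·( φ_u + (r²u² − v²)·φ_{vv}/u ). -/
/-! The matrix is `c • 1 + Vᵀ W`, where `V` has rows `x, y`, so by the Weinstein–Aronszajn
identity its determinant is `c ^ (n - 2)` times a `2 × 2` determinant in the Gram entries
`r², v, u²`. For `φ(r, ·, ·)` homogeneous of degree one, Euler's relation gives
`u φ_u + v φ_v = φ`, and since `Dφ` is homogeneous of degree zero the Hessian annihilates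
`(u, v)`: `u φ_uu + v φ_uv = 0 = u φ_uv + v φ_vv`. Eliminating `φ`, `φ_uv` and `φ_uu` with
these relations, the `2 × 2` determinant factors as `(φ/u)³ (φ_u + (r²u² − v²) φ_vv / u)`. -/

open Filter Topology Function Matrix

namespace Matrix

variable {R : Type*} [CommRing R] {m k : Type*} [Fintype m] [DecidableEq m] [Fintype k]
  [DecidableEq k]

theorem det_scalar_add_mul_of_card_le (c : R) (A : Matrix m k R) (B : Matrix k m R)
    (hle : Fintype.card k ≤ Fintype.card m) :
    (scalar m c + A * B).det
      = c ^ (Fintype.card m - Fintype.card k) * (scalar k c + B * A).det := by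
  simpa [eval_charpoly, Matrix.neg_mul, Matrix.mul_neg] using
    congrArg (Polynomial.eval c) (charpoly_mul_comm_of_le (-A) B hle)

theorem det_scalar_add_symm_rank_two {ι : Type*} [Fintype ι] [DecidableEq ι]
    (hι : 2 ≤ Fintype.card ι) (c a b d : R) (x y : ι → R) :
    (of fun i j => c * (if i = j then 1 else 0) + a * x i * x j + b * y i * y j
        + d * (x i * y j + x j * y i)).det
      = c ^ (Fintype.card ι - 2) *
        ((c + a * (x ⬝ᵥ x) + d * (x ⬝ᵥ y)) * (c + d * (x ⬝ᵥ y) + b * (y ⬝ᵥ y))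
          - (a * (x ⬝ᵥ y) + d * (y ⬝ᵥ y)) * (d * (x ⬝ᵥ x) + b * (x ⬝ᵥ y))) := by
  let V : Matrix (Fin 2) ι R := ![x, y]
  let W : Matrix (Fin 2) ι R := ![a • x + d • y, d • x + b • y]
  have hM : of (fun i j => c * (if i = j then 1 else 0) + a * x i * x j + b * y i * y j
        + d * (x i * y j + x j * y i)) = scalar ι c + Vᵀ * W := by
    ext i j
    rw [add_apply, mul_apply, Fin.sum_univ_two, transpose_apply, transpose_apply]
    simp [V, W, diagonal_apply]
    ring
  have hWV (k l : Fin 2) : (W * Vᵀ) k l = W k ⬝ᵥ V l := rfl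
  rw [hM, det_scalar_add_mul_of_card_le _ _ _ (by simpa using hι), Fintype.card_fin,
    det_fin_two]
  simp only [add_apply, scalar_apply, diagonal_apply_eq, diagonal_apply_ne _ zero_ne_one,
    diagonal_apply_ne _ one_ne_zero, hWV, W, V, cons_val_zero, cons_val_one, cons_val_fin_one,
    add_dotProduct, smul_dotProduct, smul_eq_mul, dotProduct_comm y x]
  ring

end Matrix

section Homogeneous

variable {E F : Type*} [NormedAddCommGroup E] [NormedSpace ℝ E] [NormedAddCommGroup F]
  [NormedSpace ℝ F]

theorem DifferentiableAt.hasDerivAt_comp_smul_one {g : E → F} {p : E}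
    (hg : DifferentiableAt ℝ g p) : HasDerivAt (fun t : ℝ => g (t • p)) (fderiv ℝ g p p) 1 :=
  hg.hasFDerivAt.comp_hasDerivAt_of_eq 1
    (by simpa using (hasDerivAt_id (1 : ℝ)).smul_const p) (one_smul ℝ p).symm

theorem ContDiffAt.eventually_differentiableAt {g : E → F} {p : E} (hg : ContDiffAt ℝ 2 g p) :
    ∀ᶠ q in 𝓝 p, DifferentiableAt ℝ g q :=
  (hg.eventually (by simp)).mono fun _ hq => hq.differentiableAt (by simp)

theorem ContDiffAt.hasFDerivAt_fderiv {g : E → F} {p : E} (hg : ContDiffAt ℝ 2 g p) :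
    HasFDerivAt (fderiv ℝ g) (fderiv ℝ (fderiv ℝ g) p) p :=
  ((hg.fderiv_right (m := 1) le_rfl).differentiableAt one_ne_zero).hasFDerivAt

variable {f : E → F}

theorem fderiv_apply_self_of_homogeneous (hhom : ∀ t : ℝ, 0 < t → ∀ q, f (t • q) = t • f q)
    {p : E} (hf : DifferentiableAt ℝ f p) : fderiv ℝ f p p = f p := by
  have hlin : (fun t : ℝ => f (t • p)) =ᶠ[𝓝 1] fun t => t • f p :=
    (eventually_gt_nhds one_pos).mono fun t ht => hhom t ht p
  exact hf.hasDerivAt_comp_smul_one.unique <| by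
    simpa using ((hasDerivAt_id (1 : ℝ)).smul_const (f p)).congr_of_eventuallyEq hlin

theorem fderiv_smul_of_homogeneous (hhom : ∀ t : ℝ, 0 < t → ∀ q, f (t • q) = t • f q)
    {t : ℝ} (ht : 0 < t) (p : E) : fderiv ℝ f (t • p) = fderiv ℝ f p := by
  have h := fderiv_comp_smul (f := f) (x := p) t
  rw [show (fun q => f (t • q)) = t • f from funext (hhom t ht), fderiv_const_smul_field,
    Pi.smul_apply] at h
  exact smul_right_injective _ ht.ne' h.symm

theorem fderiv_fderiv_apply_self_of_homogeneous
    (hhom : ∀ t : ℝ, 0 < t → ∀ q, f (t • q) = t • f q) {p : E}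
    (hf : DifferentiableAt ℝ (fderiv ℝ f) p) : fderiv ℝ (fderiv ℝ f) p p = 0 := by
  have hconst : (fun t : ℝ => fderiv ℝ f (t • p)) =ᶠ[𝓝 1] fun _ => fderiv ℝ f p :=
    (eventually_gt_nhds one_pos).mono fun t ht => fderiv_smul_of_homogeneous hhom ht p
  exact hf.hasDerivAt_comp_smul_one.unique ((hasDerivAt_const 1 _).congr_of_eventuallyEq hconst)

end Homogeneous

section Slices

variable {G : Type*} [NormedAddCommGroup G] [NormedSpace ℝ G] {g : ℝ × ℝ → G} {u v : ℝ}

theorem HasFDerivAt.hasDerivAt_fst_slice {g' : ℝ × ℝ →L[ℝ] G} (h : HasFDerivAt g g' (u, v)) :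
    HasDerivAt (fun s => g (s, v)) (g' (1, 0)) u :=
  h.comp_hasDerivAt u ((hasDerivAt_id u).prodMk (hasDerivAt_const u v))

theorem HasFDerivAt.hasDerivAt_snd_slice {g' : ℝ × ℝ →L[ℝ] G} (h : HasFDerivAt g g' (u, v)) :
    HasDerivAt (fun t => g (u, t)) (g' (0, 1)) v :=
  h.comp_hasDerivAt v ((hasDerivAt_const v u).prodMk (hasDerivAt_id v))

theorem ContDiffAt.deriv_deriv_fst_slice (hg : ContDiffAt ℝ 2 g (u, v)) :
    deriv (deriv fun s => g (s, v)) u = fderiv ℝ (fderiv ℝ g) (u, v) (1, 0) (1, 0) := by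
  have hslice : (deriv fun s => g (s, v)) =ᶠ[𝓝 u] fun s => fderiv ℝ g (s, v) (1, 0) :=
    ((continuous_id.prodMk continuous_const).tendsto u).eventually
      hg.eventually_differentiableAt |>.mono fun s hs => hs.hasFDerivAt.hasDerivAt_fst_slice.deriv
  rw [hslice.deriv_eq]
  simpa using (hg.hasFDerivAt_fderiv.hasDerivAt_fst_slice.clm_apply (hasDerivAt_const u _)).deriv

theorem ContDiffAt.deriv_deriv_snd_slice (hg : ContDiffAt ℝ 2 g (u, v)) :
    deriv (deriv fun t => g (u, t)) v = fderiv ℝ (fderiv ℝ g) (u, v) (0, 1) (0, 1) := by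
  have hslice : (deriv fun t => g (u, t)) =ᶠ[𝓝 v] fun t => fderiv ℝ g (u, t) (0, 1) :=
    ((continuous_const.prodMk continuous_id).tendsto v).eventually
      hg.eventually_differentiableAt |>.mono fun t ht => ht.hasFDerivAt.hasDerivAt_snd_slice.deriv
  rw [hslice.deriv_eq]
  simpa using (hg.hasFDerivAt_fderiv.hasDerivAt_snd_slice.clm_apply (hasDerivAt_const v _)).deriv

theorem ContDiffAt.deriv_fst_slice_deriv_snd_slice (hg : ContDiffAt ℝ 2 g (u, v)) :
    deriv (fun s => deriv (fun t => g (s, t)) v) u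
      = fderiv ℝ (fderiv ℝ g) (u, v) (1, 0) (0, 1) := by
  have hslice : (fun s => deriv (fun t => g (s, t)) v) =ᶠ[𝓝 u]
      fun s => fderiv ℝ g (s, v) (0, 1) :=
    ((continuous_id.prodMk continuous_const).tendsto u).eventually
      hg.eventually_differentiableAt |>.mono fun s hs => hs.hasFDerivAt.hasDerivAt_snd_slice.deriv
  rw [hslice.deriv_eq]
  simpa using (hg.hasFDerivAt_fderiv.hasDerivAt_fst_slice.clm_apply (hasDerivAt_const u _)).deriv

theorem ContinuousLinearMap.apply_pair (L : ℝ × ℝ →L[ℝ] G) (u v : ℝ) :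
    L (u, v) = u • L (1, 0) + v • L (0, 1) := by
  rw [← map_smul, ← map_smul, ← map_add]
  simp

end Slices

section EulerIdentities

variable {ψ : ℝ → ℝ → ℝ} {u v : ℝ}

theorem uncurry_smul_of_homogeneous (hhom : ∀ u v t : ℝ, 0 < t → ψ (t * u) (t * v) = t * ψ u v)
    (t : ℝ) (ht : 0 < t) (q : ℝ × ℝ) : uncurry ψ (t • q) = t • uncurry ψ q :=
  hhom q.1 q.2 t ht

theorem euler_identity (hhom : ∀ u v t : ℝ, 0 < t → ψ (t * u) (t * v) = t * ψ u v)
    (hψ : DifferentiableAt ℝ (uncurry ψ) (u, v)) :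
    u * deriv (fun s => ψ s v) u + v * deriv (fun t => ψ u t) v = ψ u v := by
  have hu : deriv (fun s => ψ s v) u = fderiv ℝ (uncurry ψ) (u, v) (1, 0) :=
    hψ.hasFDerivAt.hasDerivAt_fst_slice.deriv
  have hv : deriv (fun t => ψ u t) v = fderiv ℝ (uncurry ψ) (u, v) (0, 1) :=
    hψ.hasFDerivAt.hasDerivAt_snd_slice.deriv
  have h := fderiv_apply_self_of_homogeneous (uncurry_smul_of_homogeneous hhom) hψ
  rwa [ContinuousLinearMap.apply_pair, ← hu, ← hv] at h

theorem fderiv_fderiv_uncurry_apply_of_homogeneous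
    (hhom : ∀ u v t : ℝ, 0 < t → ψ (t * u) (t * v) = t * ψ u v)
    (hψ : ContDiffAt ℝ 2 (uncurry ψ) (u, v)) (w : ℝ × ℝ) :
    u * fderiv ℝ (fderiv ℝ (uncurry ψ)) (u, v) (1, 0) w
      + v * fderiv ℝ (fderiv ℝ (uncurry ψ)) (u, v) (0, 1) w = 0 := by
  have h := fderiv_fderiv_apply_self_of_homogeneous (uncurry_smul_of_homogeneous hhom)
    hψ.hasFDerivAt_fderiv.differentiableAt
  rw [ContinuousLinearMap.apply_pair] at h
  simpa using congrArg (· w) h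

theorem euler_identity_deriv_fst (hhom : ∀ u v t : ℝ, 0 < t → ψ (t * u) (t * v) = t * ψ u v)
    (hψ : ContDiffAt ℝ 2 (uncurry ψ) (u, v)) :
    u * deriv (deriv fun s => ψ s v) u + v * deriv (fun s => deriv (fun t => ψ s t) v) u = 0 := by
  have huu : deriv (deriv fun s => ψ s v) u = _ := hψ.deriv_deriv_fst_slice
  have huv : deriv (fun s => deriv (fun t => ψ s t) v) u = _ :=
    hψ.deriv_fst_slice_deriv_snd_slice
  rw [huu, huv, hψ.isSymmSndFDerivAt (by simp) (1, 0) (0, 1)]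
  exact fderiv_fderiv_uncurry_apply_of_homogeneous hhom hψ (1, 0)

theorem euler_identity_deriv_snd (hhom : ∀ u v t : ℝ, 0 < t → ψ (t * u) (t * v) = t * ψ u v)
    (hψ : ContDiffAt ℝ 2 (uncurry ψ) (u, v)) :
    u * deriv (fun s => deriv (fun t => ψ s t) v) u + v * deriv (deriv fun t => ψ u t) v = 0 := by
  have huv : deriv (fun s => deriv (fun t => ψ s t) v) u = _ :=
    hψ.deriv_fst_slice_deriv_snd_slice
  have hvv : deriv (deriv fun t => ψ u t) v = _ := hψ.deriv_deriv_snd_slice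
  rw [huv, hvv]
  exact fderiv_fderiv_uncurry_apply_of_homogeneous hhom hψ (0, 1)

end EulerIdentities

theorem EuclideanSpace.ofLp_dotProduct_ofLp {ι : Type*} [Fintype ι] (x y : EuclideanSpace ℝ ι) :
    WithLp.ofLp x ⬝ᵥ WithLp.ofLp y = inner ℝ x y := by
  rw [inner_eq_star_dotProduct, star_trivial, dotProduct_comm]

theorem det_formula_of_euler_identities {n : ℕ} (hn : 2 ≤ n)
    {u v R φ φu φv φuu φuv φvv c a b d : ℝ} (hu : u ≠ 0)
    (hc : c = φ * φu / u) (ha : a = φv ^ 2 + φ * φvv)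
    (hb : b = (φu ^ 2 + φ * φuu) / u ^ 2 - φ * φu / u ^ 3) (hd : d = (φu * φv + φ * φuv) / u)
    (euler : u * φu + v * φv = φ) (euler_u : u * φuu + v * φuv = 0)
    (euler_v : u * φuv + v * φvv = 0) :
    c ^ (n - 2) * ((c + a * R + d * v) * (c + d * v + b * u ^ 2)
        - (a * v + d * u ^ 2) * (d * R + b * v))
      = (φ / u) ^ (n + 1) * φu ^ (n - 2) * (φu + (R * u ^ 2 - v ^ 2) * φvv / u) := by
  have hφuv : φuv = -(v * φvv) / u := by
    field_simp
    linarith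
  have hφuu : φuu = v ^ 2 * φvv / u ^ 2 := by
    rw [hφuv] at euler_u
    field_simp at euler_u ⊢
    linarith
  have hdet : (c + a * R + d * v) * (c + d * v + b * u ^ 2) - (a * v + d * u ^ 2) * (d * R + b * v)
      = (φ / u) ^ 3 * (φu + (R * u ^ 2 - v ^ 2) * φvv / u) := by
    subst hc ha hb hd hφuv hφuu euler
    field_simp
    ring
  rw [hdet, hc, show n + 1 = n - 2 + 3 by omega, pow_add, mul_div_right_comm, mul_pow]
  ring

/-- Determinant of the fundamental tensor of a spherically symmetric Finsler
metric F = φ(|x|, |y|, ⟨x,y⟩):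
det(g) = (φ/u)^(n+1) · φ_u^(n−2) · (φ_u + (r²u² − v²)·φ_vv/u). -/
theorem stmt_19 (n : ℕ) (hn : 2 ≤ n) (x y : EuclideanSpace ℝ (Fin n)) (hy : y ≠ 0)
    (φ : ℝ → ℝ → ℝ → ℝ)
    (hC : ContDiffAt ℝ 2 (fun p : ℝ × ℝ × ℝ => φ p.1 p.2.1 p.2.2)
      (‖x‖, ‖y‖, (inner ℝ x y : ℝ)))
    (hhom : ∀ (r u v t : ℝ), 0 < t → φ r (t * u) (t * v) = t * φ r u v) :
    (Matrix.of fun i j : Fin n =>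
        φ ‖x‖ ‖y‖ (inner ℝ x y : ℝ) * deriv (fun s => φ ‖x‖ s (inner ℝ x y : ℝ)) ‖y‖ / ‖y‖ *
            (if i = j then (1 : ℝ) else 0) +
          ((deriv (fun s => φ ‖x‖ ‖y‖ s) (inner ℝ x y : ℝ)) ^ 2 +
              φ ‖x‖ ‖y‖ (inner ℝ x y : ℝ) *
                deriv (deriv (fun s => φ ‖x‖ ‖y‖ s)) (inner ℝ x y : ℝ)) * x i * x j +
          (((deriv (fun s => φ ‖x‖ s (inner ℝ x y : ℝ)) ‖y‖) ^ 2 +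
                φ ‖x‖ ‖y‖ (inner ℝ x y : ℝ) *
                  deriv (deriv (fun s => φ ‖x‖ s (inner ℝ x y : ℝ))) ‖y‖) / ‖y‖ ^ 2 -
              φ ‖x‖ ‖y‖ (inner ℝ x y : ℝ) *
                deriv (fun s => φ ‖x‖ s (inner ℝ x y : ℝ)) ‖y‖ / ‖y‖ ^ 3) * y i * y j +
          (deriv (fun s => φ ‖x‖ s (inner ℝ x y : ℝ)) ‖y‖ *
                deriv (fun s => φ ‖x‖ ‖y‖ s) (inner ℝ x y : ℝ) +
              φ ‖x‖ ‖y‖ (inner ℝ x y : ℝ) *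
                deriv (fun s => deriv (fun t => φ ‖x‖ s t) (inner ℝ x y : ℝ)) ‖y‖) / ‖y‖ *
            (x i * y j + x j * y i)).det =
      (φ ‖x‖ ‖y‖ (inner ℝ x y : ℝ) / ‖y‖) ^ (n + 1) *
        (deriv (fun s => φ ‖x‖ s (inner ℝ x y : ℝ)) ‖y‖) ^ (n - 2) *
        (deriv (fun s => φ ‖x‖ s (inner ℝ x y : ℝ)) ‖y‖ +
          (‖x‖ ^ 2 * ‖y‖ ^ 2 - (inner ℝ x y : ℝ) ^ 2) *
            deriv (deriv (fun s => φ ‖x‖ ‖y‖ s)) (inner ℝ x y : ℝ) / ‖y‖) := by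
  have hψ : ContDiffAt ℝ 2 (uncurry (φ ‖x‖)) (‖y‖, inner ℝ x y) :=
    hC.comp _ (contDiffAt_const.prodMk contDiffAt_id)
  rw [Matrix.det_scalar_add_symm_rank_two (by simpa using hn), Fintype.card_fin]
  simp only [EuclideanSpace.ofLp_dotProduct_ofLp, real_inner_self_eq_norm_sq]
  exact det_formula_of_euler_identities hn (norm_ne_zero_iff.mpr hy) rfl rfl rfl rfl
    (euler_identity (hhom ‖x‖) (hψ.differentiableAt two_ne_zero))
    (euler_identity_deriv_fst (hhom ‖x‖) hψ) (euler_identity_deriv_snd (hhom ‖x‖) hψ)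
end
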